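/- Let G be a residually finite group and A a finite alphabet with |A| ≥ 2. Then Aut(A^G) is residually finite. Conversely, if Aut(A^G) is residually finite, so is G. -/

import Mathlib

/-- The (left) shift action on configurations: `(shift g x) h = x (g⁻¹ * h)`. -/
def shift {G A : Type*} [Group G] (g : G) (x : G → A) : G → A := fun h => x (g⁻¹ * h)

/-- A subshift: a closed, shift-invariant subset of the full shift `A^G`. -/
def IsSubshift {G A : Type*} [Group G] [TopologicalSpace A] (X : Set (G → A)) : Prop :=
  IsClosed X ∧ ∀ g : G, ∀ x ∈ X, shift g x ∈ X

/-- `X` is strongly irreducible with constant `K`: whenever `S * K ∩ T = ∅`, any two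
patterns of `X` with supports `S` and `T` can be jointly realized in `X`. -/
def StronglyIrreducible {G A : Type*} [Group G] (X : Set (G → A)) (K : Finset G) : Prop :=
  ∀ S T : Finset G, (∀ s ∈ S, ∀ k ∈ K, s * k ∉ T) →
    ∀ x ∈ X, ∀ y ∈ X, ∃ z ∈ X, (∀ g ∈ S, z g = x g) ∧ (∀ g ∈ T, z g = y g)

/-- The shift action on a shift-invariant subset, as a map `X → X`. -/
def shiftX {G A : Type*} [Group G] (X : Set (G → A))
    (hX : ∀ g : G, ∀ x ∈ X, shift g x ∈ X) (g : G) (x : X) : X :=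
  ⟨shift g (x : G → A), hX g x x.2⟩

/-- The automorphism group of a subshift `X`: shift-commuting self-homeomorphisms of `X`,
as a subgroup of the permutation group of `X`. -/
def Aut {G A : Type*} [Group G] [TopologicalSpace A] (X : Set (G → A))
    (hX : ∀ g : G, ∀ x ∈ X, shift g x ∈ X) : Subgroup (Equiv.Perm X) where
  carrier := {φ | Continuous φ ∧ Continuous φ.symm ∧
    ∀ (g : G) (x : X), φ (shiftX X hX g x) = shiftX X hX g (φ x)}
  one_mem' := by
    refine ⟨?_, ?_, fun g x => rfl⟩
    · simpa using continuous_id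
    · exact continuous_id
  mul_mem' := by
    rintro a b ⟨ha1, ha2, ha3⟩ ⟨hb1, hb2, hb3⟩
    refine ⟨?_, ?_, fun g x => ?_⟩
    · have : ⇑(a * b) = ⇑a ∘ ⇑b := rfl
      rw [this]; exact ha1.comp hb1
    · have : ⇑(a * b).symm = ⇑b.symm ∘ ⇑a.symm := rfl
      rw [this]; exact hb2.comp ha2
    · have h1 : (a * b) (shiftX X hX g x) = a (b (shiftX X hX g x)) := rfl
      have h2 : (a * b) x = a (b x) := rfl
      rw [h1, h2, hb3, ha3]
  inv_mem' := by
    rintro a ⟨h1, h2, h3⟩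
    refine ⟨?_, ?_, fun g x => ?_⟩
    · have : ⇑(a⁻¹) = ⇑a.symm := rfl
      rw [this]; exact h2
    · have : ⇑(a⁻¹).symm = ⇑a := rfl
      rw [this]; exact h1
    · apply a.injective
      rw [show a (a⁻¹ (shiftX X hX g x)) = shiftX X hX g x from a.apply_symm_apply _, h3,
        show a (a⁻¹ x) = x from a.apply_symm_apply _]

/-- A group is residually finite if every non-identity element avoids some normal
subgroup of finite index. -/
def ResiduallyFinite (M : Type*) [Group M] : Prop :=
  ∀ m : M, m ≠ 1 → ∃ N : Subgroup M, N.Normal ∧ N.FiniteIndex ∧ m ∉ N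
/-!
If `G` is residually finite, configurations fixed by a finite-index subgroup are dense in `A^G`:
a finite pattern on `F ⊆ G` is realised by pulling back a function on `G ⧸ N` for a
finite-index normal `N` separating the points of `F`. For finite-index `H` the `H`-fixed
configurations form a finite set permuted by every automorphism, so restriction to it is a
homomorphism to a finite group. An automorphism `φ ≠ 1` moves every point of a nonempty open set,
hence some periodic point, and so survives one of these finite quotients.
Conversely, for `|A| ≥ 2` the right shifts embed `G` into `Aut(A^G)`.
-/

namespace ResiduallyFinite

variable {G : Type*} [Group G]

theorem exists_normal_finiteIndex_forall_mem_eq_one (hG : ResiduallyFinite G) (S : Finset G) :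
    ∃ N : Subgroup G, N.Normal ∧ N.FiniteIndex ∧ ∀ s ∈ S, s ∈ N → s = 1 := by
  classical
  induction S using Finset.induction_on with
  | empty => exact ⟨⊤, inferInstance, inferInstance, by simp⟩
  | insert a S _ ih =>
    obtain ⟨N, hN, hNfi, hNS⟩ := ih
    by_cases ha : a = 1
    · exact ⟨N, hN, hNfi, by simpa [ha] using hNS⟩
    obtain ⟨M, hM, hMfi, haM⟩ := hG a ha
    refine ⟨N ⊓ M, inferInstance, inferInstance, ?_⟩
    simp only [Finset.mem_insert, forall_eq_or_imp, Subgroup.mem_inf]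
    exact ⟨fun h => absurd h.2 haM, fun s hs h => hNS s hs h.1⟩

theorem exists_normal_finiteIndex_injOn (hG : ResiduallyFinite G) (F : Finset G) :
    ∃ N : Subgroup G, N.Normal ∧ N.FiniteIndex ∧
      Set.InjOn (QuotientGroup.mk : G → G ⧸ N) F := by
  classical
  obtain ⟨N, hN, hNfi, hNF⟩ :=
    hG.exists_normal_finiteIndex_forall_mem_eq_one ((F ×ˢ F).image fun p => p.1⁻¹ * p.2)
  refine ⟨N, hN, hNfi, fun a ha b hb hab => ?_⟩
  exact inv_mul_eq_one.1 <| hNF (a⁻¹ * b)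
    (Finset.mem_image.2 ⟨(a, b), Finset.mem_product.2 ⟨ha, hb⟩, rfl⟩)
    (QuotientGroup.eq.1 hab)

theorem of_injective {M : Type*} [Group M] (f : G →* M) (hf : Function.Injective f)
    (hM : ResiduallyFinite M) : ResiduallyFinite G := by
  intro g hg
  obtain ⟨N, hN, hNfi, hgN⟩ := hM (f g) ((map_ne_one_iff f hf).2 hg)
  have hfi : (N.comap f).FiniteIndex :=
    ⟨by simpa using
      Subgroup.relIndex_comap_ne_zero f (K := ⊤) (by simpa using hNfi.index_ne_zero)⟩
  exact ⟨N.comap f, hN.comap f, hfi, hgN⟩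

end ResiduallyFinite

theorem dense_of_forall_finset_exists_eqOn {ι : Type*} {π : ι → Type*}
    [∀ i, TopologicalSpace (π i)] {s : Set (∀ i, π i)}
    (h : ∀ (x : ∀ i, π i) (I : Finset ι), ∃ y ∈ s, ∀ i ∈ I, y i = x i) : Dense s := by
  refine fun x => mem_closure_iff_nhds.2 fun t ht => ?_
  rw [nhds_pi, Filter.mem_pi] at ht
  obtain ⟨I, hI, u, hu, hIu⟩ := ht
  obtain ⟨y, hys, hyx⟩ := h x hI.toFinset
  refine ⟨y, hIu fun i hi => ?_, hys⟩
  rw [hyx i (hI.mem_toFinset.2 hi)]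
  exact mem_of_mem_nhds (hu i)

section Shift

variable {G A : Type*} [Group G]

theorem shift_comp_mk_of_mem (N : Subgroup G) [N.Normal] (z : G ⧸ N → A) {n : G}
    (hn : n ∈ N) :
    shift n (z ∘ QuotientGroup.mk) = z ∘ QuotientGroup.mk := by
  funext h
  simp [shift, (QuotientGroup.eq_one_iff n).2 hn]

theorem ResiduallyFinite.dense_shiftPeriodic [TopologicalSpace A] (hG : ResiduallyFinite G) :
    Dense {y : G → A | ∃ H : Subgroup G, H.FiniteIndex ∧ ∀ h ∈ H, shift h y = y} := by
  refine dense_of_forall_finset_exists_eqOn fun x F => ?_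
  obtain ⟨N, hN, hNfi, hinj⟩ := hG.exists_normal_finiteIndex_injOn F
  let e : F → G ⧸ N := fun f => (f : G)
  have he : Function.Injective e := fun a b hab => Subtype.ext (hinj a.2 b.2 hab)
  let z : G ⧸ N → A := Function.extend e (fun f => x f) fun _ => x 1
  exact ⟨z ∘ QuotientGroup.mk, ⟨N, hNfi, fun n hn => shift_comp_mk_of_mem N z hn⟩,
    fun f hf => he.extend_apply (fun f => x f) (fun _ => x 1) ⟨f, hf⟩⟩

end Shift

section Aut

variable {G A : Type*} [Group G] (X : Set (G → A)) (hX : ∀ g : G, ∀ x ∈ X, shift g x ∈ X)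

def shiftFixedPoints (H : Subgroup G) : Set X := {y | ∀ h ∈ H, shiftX X hX h y = y}

theorem finite_shiftFixedPoints [Finite A] (H : Subgroup G) [H.FiniteIndex] :
    (shiftFixedPoints X hX H).Finite := by
  -- an `H`-fixed `y` is constant on right cosets `H g`, so `g ↦ y g⁻¹` descends to `G ⧸ H`
  let descend (y : shiftFixedPoints X hX H) : G ⧸ H → A :=
    fun q => q.liftOn' (fun g => (y : X).1 g⁻¹) fun a b hab => by
      have hy := congrArg (fun z : X => z.1 a⁻¹) (y.2 _ (QuotientGroup.leftRel_apply.1 hab))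
      simpa [shiftX, shift] using hy.symm
  refine Set.finite_coe_iff.1 (Finite.of_injective descend fun y z hyz => ?_)
  ext g
  simpa [descend] using congrFun hyz (g⁻¹ : G)

variable [TopologicalSpace A] {X hX}

theorem apply_mem_shiftFixedPoints {φ : Equiv.Perm X} (hφ : φ ∈ Aut X hX) {H : Subgroup G}
    {y : X} (hy : y ∈ shiftFixedPoints X hX H) : φ y ∈ shiftFixedPoints X hX H := by
  intro h hh
  rw [← hφ.2.2, hy h hh]

variable (X hX)

def autRestrictShiftFixedPoints (H : Subgroup G) :
    Aut X hX →* Equiv.Perm (shiftFixedPoints X hX H) where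
  toFun φ := φ.1.subtypePerm fun y =>
    ⟨fun hy => by simpa using apply_mem_shiftFixedPoints φ⁻¹.2 hy,
      apply_mem_shiftFixedPoints φ.2⟩
  map_one' := rfl
  map_mul' _ _ := rfl

theorem residuallyFinite_aut_of_dense [Finite A] [T2Space A]
    (hdense : Dense {y : X | ∃ H : Subgroup G, H.FiniteIndex ∧ y ∈ shiftFixedPoints X hX H}) :
    ResiduallyFinite (Aut X hX) := by
  intro φ hφ
  have hmoved : IsOpen {y : X | φ.1 y ≠ y} := isOpen_ne_fun φ.2.1 continuous_id
  obtain ⟨x, hx⟩ : ∃ x, φ.1 x ≠ x := by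
    by_contra! h
    exact hφ (Subtype.ext (Equiv.ext h))
  obtain ⟨y, ⟨H, hH, hy⟩, hφy⟩ := hdense.exists_mem_open hmoved ⟨x, hx⟩
  have : Finite (shiftFixedPoints X hX H) := (finite_shiftFixedPoints X hX H).to_subtype
  refine ⟨(autRestrictShiftFixedPoints X hX H).ker, inferInstance,
    Subgroup.finiteIndex_ker _, fun hker => hφy ?_⟩
  exact congrArg Subtype.val (Equiv.ext_iff.1 hker ⟨y, hy⟩)

end Aut

section FullShift

variable {G A : Type*} [Group G] [TopologicalSpace A]

abbrev fullShiftAut (G A : Type*) [Group G] [TopologicalSpace A] :=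
  Aut (Set.univ : Set (G → A)) fun _ _ _ => Set.mem_univ _

theorem ResiduallyFinite.dense_shiftFixedPoints_univ (hG : ResiduallyFinite G) :
    Dense {y : (Set.univ : Set (G → A)) | ∃ H : Subgroup G, H.FiniteIndex ∧
      y ∈ shiftFixedPoints Set.univ (fun _ _ _ => Set.mem_univ _) H} :=
  Dense.mono (by rintro y ⟨H, hH, hy⟩; exact ⟨H, hH, fun h hh => Subtype.ext (hy h hh)⟩)
    (hG.dense_shiftPeriodic.preimage isOpen_univ.isOpenMap_subtype_val)

def rightShiftPerm (g : G) : Equiv.Perm (Set.univ : Set (G → A)) where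
  toFun x := ⟨fun h => x.1 (h * g), Set.mem_univ _⟩
  invFun x := ⟨fun h => x.1 (h * g⁻¹), Set.mem_univ _⟩
  left_inv x := by simp
  right_inv x := by simp

theorem continuous_rightShiftPerm (g : G) : Continuous (rightShiftPerm (A := A) g) := by
  show Continuous fun x : (Set.univ : Set (G → A)) => (⟨fun h => x.1 (h * g), _⟩ : Set.univ)
  refine Continuous.subtype_mk (continuous_pi fun h => ?_) _
  exact (continuous_apply (h * g)).comp continuous_subtype_val

theorem rightShiftPerm_mem_aut (g : G) : rightShiftPerm g ∈ fullShiftAut G A := by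
  refine ⟨?_, ?_, fun g' x => Subtype.ext (funext fun h => ?_)⟩
  · exact continuous_rightShiftPerm g
  · exact continuous_rightShiftPerm g⁻¹
  · simp [rightShiftPerm, shiftX, shift, mul_assoc]

def rightShift : G →* fullShiftAut G A where
  toFun g := ⟨rightShiftPerm g, rightShiftPerm_mem_aut g⟩
  map_one' := by ext; simp [rightShiftPerm]
  map_mul' _ _ := by ext; simp [rightShiftPerm, mul_assoc]

theorem rightShift_injective [Nontrivial A] :
    Function.Injective (rightShift : G →* fullShiftAut G A) := by
  classical
  refine (injective_iff_map_eq_one _).2 fun g hg => by_contra fun hg1 => ?_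
  obtain ⟨a, b, hab⟩ := exists_pair_ne A
  let δ : (Set.univ : Set (G → A)) := ⟨fun h => if h = 1 then a else b, Set.mem_univ _⟩
  have hfix : rightShiftPerm g δ = δ := Equiv.ext_iff.1 (congrArg Subtype.val hg) δ
  have := congrFun (congrArg Subtype.val hfix) 1
  simp [rightShiftPerm, δ, hg1, hab.symm] at this

end FullShift

/-- for `|A| ≥ 2`, the automorphism group of the full shift `A^G` is
residually finite if and only if `G` is residually finite. -/
theorem stmt9 {G A : Type*} [Group G] [Fintype A] [TopologicalSpace A] [DiscreteTopology A]
    [Nontrivial A] :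
    ResiduallyFinite G ↔
      ResiduallyFinite (Aut (Set.univ : Set (G → A)) (fun _ _ _ => Set.mem_univ _)) :=
  ⟨fun hG => residuallyFinite_aut_of_dense _ _ hG.dense_shiftFixedPoints_univ,
    ResiduallyFinite.of_injective rightShift rightShift_injective⟩
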